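/- If G is a graph in the family 𝓑 and v is either the root of G or a vertex of degree 2 in G, then i(G − v) = i(G) − 1, where G − v denotes the graph obtained from G by deleting the vertex v. -/

import Mathlib

namespace PaperIndepDom

open SimpleGraph

/-- The degree of a vertex `v` in a graph `G`. -/
noncomputable def deg {V : Type*} (G : SimpleGraph V) (v : V) : ℕ :=
  (G.neighborSet v).ncard

/-- A set `S` is an independent dominating set of `G`. -/
def IsIDSet {V : Type*} (G : SimpleGraph V) (S : Set V) : Prop :=
  (∀ u ∈ S, ∀ v ∈ S, ¬ G.Adj u v) ∧ ∀ v, v ∉ S → ∃ u ∈ S, G.Adj u v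

/-- The independent domination number `i(G)`. -/
noncomputable def iNum {V : Type*} (G : SimpleGraph V) : ℕ :=
  sInf {n | ∃ S : Set V, IsIDSet G S ∧ S.ncard = n}

/-- The base graph `B₁`: a copy of `K_{2,3}` (vertices `0, 1` forming the partite set of
size 2, vertices `2, 3, 4` forming the partite set of size 3) together with a new root
vertex `5` joined to the degree-2 vertex `2`. -/
def baseGraph : SimpleGraph (Fin 6) :=
  SimpleGraph.fromRel (fun i j =>
    (i.val ≤ 1 ∧ 2 ≤ j.val ∧ j.val ≤ 4) ∨ (i = 2 ∧ j = 5))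

/-- The graph obtained from `G` by adding a vertex-disjoint copy of `K_{2,3}`
(on the vertex set `Fin 2 ⊕ Fin 3`) together with an edge joining the vertex `v'` of `G`
to the degree-2 vertex `Sum.inr t` of the added copy of `K_{2,3}` (operation `O₁`). -/
def addK23 {V : Type*} (G : SimpleGraph V) (v' : V) (t : Fin 3) :
    SimpleGraph (V ⊕ (Fin 2 ⊕ Fin 3)) :=
  SimpleGraph.fromRel (fun x y =>
    (∃ a b, G.Adj a b ∧ x = Sum.inl a ∧ y = Sum.inl b) ∨
    (∃ i j, x = Sum.inr (Sum.inl i) ∧ y = Sum.inr (Sum.inr j)) ∨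
    (x = Sum.inl v' ∧ y = Sum.inr (Sum.inr t)))

/-- `FamilyBRoot G r` means that `G` belongs to the family `𝓑` (the smallest family of
graphs containing the base graph and closed under the operation `O₁`, considered up to
isomorphism) and `r` is the root of `G` (the unique vertex lying on no cycle). -/
inductive FamilyBRoot : ∀ {V : Type}, SimpleGraph V → V → Prop
  | base : FamilyBRoot baseGraph 5
  | extend {V : Type} {G : SimpleGraph V} {r : V} (hG : FamilyBRoot G r) (v' : V)
      (hv' : deg G v' ≤ 2) (t : Fin 3) : FamilyBRoot (addK23 G v' t) (Sum.inl r)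
  | iso {V W : Type} {G : SimpleGraph V} {H : SimpleGraph W} {r : V}
      (e : G ≃g H) (hG : FamilyBRoot G r) : FamilyBRoot H (e r)

section Basic

variable {V W : Type*} {G : SimpleGraph V} {H : SimpleGraph W}

lemma iNum_le {S : Set V} (h : IsIDSet G S) : iNum G ≤ S.ncard :=
  Nat.sInf_le ⟨S, h, rfl⟩

lemma exists_isIDSet [Finite V] (G : SimpleGraph V) : ∃ S, IsIDSet G S := by
  classical
  set 𝒮 : Set ℕ := {n | ∃ S : Set V, (∀ u ∈ S, ∀ v ∈ S, ¬ G.Adj u v) ∧ S.ncard = n} with h𝒮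
  have hne : 𝒮.Nonempty := ⟨0, ∅, by simp, by simp⟩
  have hbdd : BddAbove 𝒮 := by
    refine ⟨Nat.card V, ?_⟩
    rintro n ⟨S, -, rfl⟩
    simpa [Set.ncard_univ] using Set.ncard_le_ncard (Set.subset_univ S) Set.finite_univ
  obtain ⟨S, hSi, hScard⟩ := Nat.sSup_mem hne hbdd
  refine ⟨S, hSi, ?_⟩
  intro v hv
  by_contra hcon
  push_neg at hcon
  have hind : ∀ u ∈ insert v S, ∀ w ∈ insert v S, ¬ G.Adj u w := by
    intro u hu w hw
    rcases hu with rfl | hu <;> rcases hw with rfl | hw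
    · exact G.irrefl
    · intro h; exact hcon w hw h.symm
    · exact hcon u hu
    · exact hSi u hu w hw
  have hmem : (insert v S).ncard ∈ 𝒮 := ⟨insert v S, hind, rfl⟩
  have := le_csSup hbdd hmem
  rw [Set.ncard_insert_of_notMem hv (Set.toFinite S), hScard] at this
  omega

lemma exists_min [Finite V] (G : SimpleGraph V) :
    ∃ S, IsIDSet G S ∧ S.ncard = iNum G := by
  obtain ⟨S, hS⟩ := exists_isIDSet G
  have : iNum G ∈ {n | ∃ S : Set V, IsIDSet G S ∧ S.ncard = n} :=
    Nat.sInf_mem ⟨S.ncard, S, hS, rfl⟩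
  exact this

lemma le_iNum [Finite V] {m : ℕ} (G : SimpleGraph V)
    (h : ∀ S, IsIDSet G S → m ≤ S.ncard) : m ≤ iNum G := by
  obtain ⟨S, hS, hc⟩ := exists_min G
  exact hc ▸ h S hS

lemma one_le_iNum [Finite V] (G : SimpleGraph V) (r : V) : 1 ≤ iNum G := by
  refine le_iNum G fun S hS => ?_
  rcases Set.eq_empty_or_nonempty S with rfl | hne
  · obtain ⟨u, hu, -⟩ := hS.2 r (by simp)
    simp at hu
  · exact (Set.ncard_pos (Set.toFinite S)).mpr hne

lemma isIDSet_map (e : G ≃g H) {S : Set V} (h : IsIDSet G S) : IsIDSet H (e '' S) := by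
  constructor
  · rintro _ ⟨u, hu, rfl⟩ _ ⟨w, hw, rfl⟩ hadj
    exact h.1 u hu w hw (e.map_adj_iff.mp hadj)
  · intro w hw
    obtain ⟨u, hu, hadj⟩ := h.2 (e.symm w) (fun hmem => hw ⟨_, hmem, by simp⟩)
    refine ⟨e u, ⟨u, hu, rfl⟩, ?_⟩
    have := e.map_adj_iff.mpr hadj
    simpa using this

lemma iNum_set_subset (e : G ≃g H) :
    {n | ∃ S : Set V, IsIDSet G S ∧ S.ncard = n} ⊆
      {n | ∃ S : Set W, IsIDSet H S ∧ S.ncard = n} := by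
  rintro n ⟨S, hS, rfl⟩
  exact ⟨e '' S, isIDSet_map e hS,
    Set.ncard_image_of_injective _ (EquivLike.injective e)⟩

lemma iNum_congr (e : G ≃g H) : iNum G = iNum H := by
  unfold iNum
  exact congrArg sInf (Set.Subset.antisymm (iNum_set_subset e) (iNum_set_subset e.symm))

lemma deg_congr (e : G ≃g H) (v : V) : deg H (e v) = deg G v := by
  have himg : H.neighborSet (e v) = e '' G.neighborSet v := by
    ext w
    constructor
    · intro hw
      refine ⟨e.symm w, ?_, by simp⟩
      have : H.Adj (e v) (e (e.symm w)) := by simpa using hw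
      exact e.map_adj_iff.mp this
    · rintro ⟨u, hu, rfl⟩
      exact e.map_adj_iff.mpr hu
  rw [deg, deg, himg, Set.ncard_image_of_injective _ (EquivLike.injective e)]

/-- Isomorphism between vertex-deleted subgraphs induced by an isomorphism. -/
noncomputable def isoInduceCompl (e : G ≃g H) (u : V) :
    (G.induce ({u}ᶜ : Set V)) ≃g (H.induce ({(e u : W)}ᶜ : Set W)) where
  toEquiv := (e.toEquiv.subtypeEquiv (p := fun a => a ∈ ({u}ᶜ : Set V))
    (q := fun b => b ∈ ({(e u : W)}ᶜ : Set W)) (by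
      intro a
      simp [Set.mem_compl_iff, (EquivLike.injective e).eq_iff]))
  map_rel_iff' := by
    intro a b
    simp [comap_adj]
    exact e.map_adj_iff

/-- ambient-set description of IDSets of a vertex-deleted subgraph -/
def DelIDS (G : SimpleGraph V) (v : V) (A : Set V) : Prop :=
  v ∉ A ∧ (∀ u ∈ A, ∀ w ∈ A, ¬ G.Adj u w) ∧ ∀ u, u ∉ A → u ≠ v → ∃ b ∈ A, G.Adj b u

lemma delIDS_of_isIDSet {v : V} {S : Set ({v}ᶜ : Set V)}
    (h : IsIDSet (G.induce ({v}ᶜ : Set V)) S) : DelIDS G v (Subtype.val '' S) := by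
  refine ⟨?_, ?_, ?_⟩
  · rintro ⟨⟨a, ha⟩, -, h⟩
    exact ha h
  · rintro _ ⟨x, hx, rfl⟩ _ ⟨y, hy, rfl⟩ hadj
    exact h.1 x hx y hy hadj
  · intro u hu hne
    obtain ⟨b, hb, hadj⟩ := h.2 ⟨u, by simpa using hne⟩ (fun hmem => hu ⟨_, hmem, rfl⟩)
    exact ⟨b.val, ⟨b, hb, rfl⟩, hadj⟩

lemma isIDSet_of_delIDS {v : V} {A : Set V} (h : DelIDS G v A) :
    IsIDSet (G.induce ({v}ᶜ : Set V)) (Subtype.val ⁻¹' A) := by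
  refine ⟨?_, ?_⟩
  · rintro ⟨x, hx⟩ hxm ⟨y, hy⟩ hym hadj
    exact h.2.1 x hxm y hym hadj
  · rintro ⟨u, hu⟩ hum
    obtain ⟨b, hb, hadj⟩ := h.2.2 u hum (by simpa using hu)
    have hbv : b ≠ v := fun hq => h.1 (by rw [← hq]; exact hb)
    exact ⟨⟨b, by simpa using hbv⟩, hb, hadj⟩

lemma ncard_preimage_val {v : V} {A : Set V} (hA : v ∉ A) :
    (Subtype.val ⁻¹' A : Set ({v}ᶜ : Set V)).ncard = A.ncard := by
  rw [← Set.ncard_image_of_injective _ Subtype.val_injective,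
    Subtype.image_preimage_coe]
  congr 1
  rw [Set.inter_eq_right]
  intro x hx
  simp only [Set.mem_compl_iff, Set.mem_singleton_iff]
  intro hq
  exact hA (hq ▸ hx)

lemma iNum_del_le {v : V} {A : Set V} (h : DelIDS G v A) :
    iNum (G.induce ({v}ᶜ : Set V)) ≤ A.ncard := by
  have := iNum_le (isIDSet_of_delIDS h)
  rwa [ncard_preimage_val h.1] at this

lemma exists_del_min [Finite V] (G : SimpleGraph V) (v : V) :
    ∃ A, DelIDS G v A ∧ A.ncard = iNum (G.induce ({v}ᶜ : Set V)) := by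
  obtain ⟨S, hS, hc⟩ := exists_min (G.induce ({v}ᶜ : Set V))
  exact ⟨Subtype.val '' S, delIDS_of_isIDSet hS,
    by rw [Set.ncard_image_of_injective _ Subtype.val_injective]; exact hc⟩

lemma le_iNum_del [Finite V] {m : ℕ} (G : SimpleGraph V) (v : V)
    (h : ∀ A, DelIDS G v A → m ≤ A.ncard) : m ≤ iNum (G.induce ({v}ᶜ : Set V)) := by
  obtain ⟨A, hA, hc⟩ := exists_del_min G v
  exact hc ▸ h A hA

end Basic

set_option linter.unusedSectionVars false

section AddK23

open Sum

variable {V : Type*} (G : SimpleGraph V) (v' : V) (t : Fin 3)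

@[simp] lemma addK23_adj_inl_inl {a b : V} :
    (addK23 G v' t).Adj (inl a) (inl b) ↔ G.Adj a b := by
  simp only [addK23, SimpleGraph.fromRel_adj]
  constructor
  · rintro ⟨hne, (⟨x, y, hxy, h1, h2⟩ | ⟨i, j, h1, h2⟩ | ⟨h1, h2⟩) |
      (⟨x, y, hxy, h1, h2⟩ | ⟨i, j, h1, h2⟩ | ⟨h1, h2⟩)⟩ <;>
      simp_all [SimpleGraph.adj_comm]
  · intro h
    exact ⟨by simp [h.ne], Or.inl (Or.inl ⟨a, b, h, rfl, rfl⟩)⟩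

@[simp] lemma addK23_adj_inl_inr {a : V} {w : Fin 2 ⊕ Fin 3} :
    (addK23 G v' t).Adj (inl a) (inr w) ↔ (a = v' ∧ w = inr t) := by
  simp only [addK23, SimpleGraph.fromRel_adj]
  constructor
  · rintro ⟨hne, (⟨x, y, hxy, h1, h2⟩ | ⟨i, j, h1, h2⟩ | ⟨h1, h2⟩) |
      (⟨x, y, hxy, h1, h2⟩ | ⟨i, j, h1, h2⟩ | ⟨h1, h2⟩)⟩ <;> simp_all
  · rintro ⟨rfl, rfl⟩
    exact ⟨by simp, Or.inl (Or.inr (Or.inr ⟨rfl, rfl⟩))⟩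

@[simp] lemma addK23_adj_inr_inl {a : V} {w : Fin 2 ⊕ Fin 3} :
    (addK23 G v' t).Adj (inr w) (inl a) ↔ (a = v' ∧ w = inr t) := by
  rw [SimpleGraph.adj_comm]; exact addK23_adj_inl_inr G v' t

@[simp] lemma addK23_adj_inr_inr {w u : Fin 2 ⊕ Fin 3} :
    (addK23 G v' t).Adj (inr w) (inr u) ↔
      ((∃ i j, w = inl i ∧ u = inr j) ∨ (∃ i j, w = inr i ∧ u = inl j)) := by
  simp only [addK23, SimpleGraph.fromRel_adj]
  constructor
  · rintro ⟨hne, (⟨x, y, hxy, h1, h2⟩ | ⟨i, j, h1, h2⟩ | ⟨h1, h2⟩) |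
      (⟨x, y, hxy, h1, h2⟩ | ⟨i, j, h1, h2⟩ | ⟨h1, h2⟩)⟩
    · simp_all
    · exact Or.inl ⟨i, j, by simpa using h1, by simpa using h2⟩
    · simp_all
    · simp_all
    · exact Or.inr ⟨j, i, by simpa using h2, by simpa using h1⟩
    · simp_all
  · rintro (⟨i, j, rfl, rfl⟩ | ⟨i, j, rfl, rfl⟩)
    · exact ⟨by simp, Or.inl (Or.inr (Or.inl ⟨i, j, rfl, rfl⟩))⟩
    · exact ⟨by simp, Or.inr (Or.inr (Or.inl ⟨j, i, rfl, rfl⟩))⟩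

variable [Finite V]

lemma addK23_deg_inl_ne (a : V) (h : a ≠ v') :
    deg (addK23 G v' t) (inl a) = deg G a := by
  have hset : (addK23 G v' t).neighborSet (inl a) = inl '' G.neighborSet a := by
    ext w
    cases w with
    | inl b => simp [SimpleGraph.mem_neighborSet]
    | inr w => simp [SimpleGraph.mem_neighborSet, h]
  rw [deg, hset, Set.ncard_image_of_injective _ Sum.inl_injective, deg]

lemma addK23_deg_inl_eq :
    deg (addK23 G v' t) (inl v') = deg G v' + 1 := by
  have hset : (addK23 G v' t).neighborSet (inl v') =
      insert (inr (inr t)) (inl '' G.neighborSet v') := by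
    ext w
    cases w with
    | inl b => simp [SimpleGraph.mem_neighborSet]
    | inr w => simp [SimpleGraph.mem_neighborSet, eq_comm]
  rw [deg, hset, Set.ncard_insert_of_notMem (by simp) (Set.toFinite _),
    Set.ncard_image_of_injective _ Sum.inl_injective, deg]

lemma addK23_deg_inr_inl (i : Fin 2) :
    deg (addK23 G v' t) (inr (inl i)) = 3 := by
  have hset : (addK23 G v' t).neighborSet (inr (inl i)) =
      inr '' (inr '' (Set.univ : Set (Fin 3))) := by
    ext w
    cases w with
    | inl b => simp [SimpleGraph.mem_neighborSet]
    | inr w => cases w <;> simp [SimpleGraph.mem_neighborSet]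
  rw [deg, hset, Set.ncard_image_of_injective _ Sum.inr_injective,
    Set.ncard_image_of_injective _ Sum.inr_injective, Set.ncard_univ]
  simp

lemma addK23_deg_inr_inr_t :
    deg (addK23 G v' t) (inr (inr t)) = 3 := by
  have hset : (addK23 G v' t).neighborSet (inr (inr t)) =
      insert (inl v') (inr '' (inl '' (Set.univ : Set (Fin 2)))) := by
    ext w
    cases w with
    | inl b => simp [SimpleGraph.mem_neighborSet]
    | inr w => cases w <;> simp [SimpleGraph.mem_neighborSet] <;> rename_i i <;> fin_cases i <;> simp
  rw [deg, hset, Set.ncard_insert_of_notMem (by simp) (Set.toFinite _),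
    Set.ncard_image_of_injective _ Sum.inr_injective,
    Set.ncard_image_of_injective _ Sum.inl_injective, Set.ncard_univ]
  simp

lemma addK23_deg_inr_inr {j : Fin 3} (h : j ≠ t) :
    deg (addK23 G v' t) (inr (inr j)) = 2 := by
  have hset : (addK23 G v' t).neighborSet (inr (inr j)) =
      inr '' (inl '' (Set.univ : Set (Fin 2))) := by
    ext w
    cases w with
    | inl b =>
        simp only [SimpleGraph.mem_neighborSet, addK23_adj_inr_inl, Set.mem_image]
        simp only [Sum.inr.injEq, reduceCtorEq, exists_false, and_false, iff_false, not_and]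
        intro _ hq
        exact h hq
    | inr w => cases w <;> simp [SimpleGraph.mem_neighborSet] <;> rename_i i <;> fin_cases i <;> simp
  rw [deg, hset, Set.ncard_image_of_injective _ Sum.inr_injective,
    Set.ncard_image_of_injective _ Sum.inl_injective, Set.ncard_univ]
  simp

lemma sum_ncard_decomp (A' : Set (V ⊕ (Fin 2 ⊕ Fin 3))) :
    A'.ncard = (Sum.inl ⁻¹' A').ncard + (A' ∩ Set.range inr).ncard := by
  have hsplit : A' = (Sum.inl '' (Sum.inl ⁻¹' A')) ∪ (A' ∩ Set.range inr) := by
    ext x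
    cases x <;> simp
  have hdisj : Disjoint (Sum.inl '' (Sum.inl ⁻¹' A') : Set (V ⊕ (Fin 2 ⊕ Fin 3)))
      (A' ∩ Set.range inr) := by
    rw [Set.disjoint_left]
    rintro x ⟨a, -, rfl⟩ ⟨-, w, hw⟩
    exact (by simp at hw : False)
  conv_lhs => rw [hsplit]
  rw [Set.ncard_union_eq hdisj (Set.toFinite _) (Set.toFinite _),
    Set.ncard_image_of_injective _ Sum.inl_injective]

lemma dominator_of_p {b} {i : Fin 2}
    (hadj : (addK23 G v' t).Adj b (inr (inl i))) : ∃ k, b = inr (inr k) := by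
  cases b with
  | inl a => simp at hadj
  | inr w =>
    cases w with
    | inl i' => simp at hadj
    | inr k => exact ⟨k, rfl⟩

lemma dominator_of_x {b} {k : Fin 3} (hk : k ≠ t)
    (hadj : (addK23 G v' t).Adj b (inr (inr k))) : ∃ i, b = inr (inl i) := by
  cases b with
  | inl a =>
    rw [addK23_adj_inl_inr] at hadj
    exact absurd (Sum.inr_injective hadj.2) hk
  | inr w =>
    cases w with
    | inl i => exact ⟨i, rfl⟩
    | inr k' => simp at hadj

lemma block_two {A' : Set (V ⊕ (Fin 2 ⊕ Fin 3))}
    (hind : ∀ u ∈ A', ∀ w ∈ A', ¬ (addK23 G v' t).Adj u w)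
    (hdomx : ∀ k : Fin 3, k ≠ t →
      (inr (inr k) ∈ A' ∨ ∃ b ∈ A', (addK23 G v' t).Adj b (inr (inr k))))
    (hdomp : ∀ i : Fin 2,
      (inr (inl i) ∈ A' ∨ ∃ b ∈ A', (addK23 G v' t).Adj b (inr (inl i)))) :
    2 ≤ (A' ∩ Set.range inr).ncard := by
  obtain ⟨k₁, k₂, hk12, hk1t, hk2t⟩ : ∃ k₁ k₂ : Fin 3, k₁ ≠ k₂ ∧ k₁ ≠ t ∧ k₂ ≠ t := by
    have : ∀ t : Fin 3, ∃ k₁ k₂ : Fin 3, k₁ ≠ k₂ ∧ k₁ ≠ t ∧ k₂ ≠ t := by decide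
    exact this t
  have key : ∀ x y : V ⊕ (Fin 2 ⊕ Fin 3), x ∈ A' → y ∈ A' → x ≠ y →
      x ∈ Set.range (inr : (Fin 2 ⊕ Fin 3) → V ⊕ (Fin 2 ⊕ Fin 3)) → y ∈ Set.range inr →
      2 ≤ (A' ∩ Set.range inr).ncard := by
    intro x y hx hy hne hxr hyr
    exact (Set.one_lt_ncard (Set.toFinite _)).mpr ⟨x, ⟨hx, hxr⟩, y, ⟨hy, hyr⟩, hne⟩
  have pimp : ∀ i i' : Fin 2, i ≠ i' → inr (inl i) ∈ A' → inr (inl i') ∈ A' := by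
    intro i i' _ hi
    rcases hdomp i' with h | ⟨b, hb, hadj⟩
    · exact h
    · obtain ⟨k, rfl⟩ := dominator_of_p G v' t hadj
      exact absurd (by simp : (addK23 G v' t).Adj (inr (inr k)) (inr (inl i)))
        (hind _ hb _ hi)
  by_cases h0 : inr (inl 0) ∈ A'
  · exact key _ _ h0 (pimp 0 1 (by decide) h0) (by simp) (by simp) (by simp)
  · have hx : ∀ k : Fin 3, k ≠ t → inr (inr k) ∈ A' := by
      intro k hk
      rcases hdomx k hk with h | ⟨b, hb, hadj⟩
      · exact h
      · obtain ⟨i, rfl⟩ := dominator_of_x G v' t hk hadj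
        fin_cases i
        · exact absurd hb h0
        · exact absurd (pimp 1 0 (by decide) hb) h0
    exact key _ _ (hx k₁ hk1t) (hx k₂ hk2t) (by simp [hk12]) (by simp) (by simp)

lemma isIDSet_union_pair {S : Set V} (hS : IsIDSet G S) :
    IsIDSet (addK23 G v' t) (inl '' S ∪ {inr (inl 0), inr (inl 1)}) := by
  constructor
  · rintro x (⟨a, ha, rfl⟩ | hx) y (⟨b, hb, rfl⟩ | hy) hadj
    · exact hS.1 a ha b hb (by simpa using hadj)
    · rcases hy with rfl | rfl <;> simp at hadj
    · rcases hx with rfl | rfl <;> simp at hadj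
    · rcases hx with rfl | rfl <;> rcases hy with rfl | rfl <;> simp at hadj
  · intro w hw
    cases w with
    | inl u =>
      have hu : u ∉ S := fun h => hw (Or.inl ⟨u, h, rfl⟩)
      obtain ⟨b, hb, hadj⟩ := hS.2 u hu
      exact ⟨inl b, Or.inl ⟨b, hb, rfl⟩, by simpa using hadj⟩
    | inr w =>
      cases w with
      | inl i =>
        exfalso
        apply hw
        fin_cases i
        · exact Or.inr (Or.inl rfl)
        · exact Or.inr (Or.inr rfl)
      | inr k =>
        exact ⟨inr (inl 0), Or.inr (Or.inl rfl), by simp⟩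

lemma ncard_union_pair {S : Set V} :
    (inl '' S ∪ {inr (inl 0), inr (inl 1)} : Set (V ⊕ (Fin 2 ⊕ Fin 3))).ncard
      = S.ncard + 2 := by
  rw [Set.ncard_union_eq ?_ (Set.toFinite _) (Set.toFinite _),
    Set.ncard_image_of_injective _ Sum.inl_injective, Set.ncard_pair (by simp)]
  rw [Set.disjoint_left]
  rintro x ⟨a, -, rfl⟩ (h | h) <;> simp at h

/-- The key lower-bound extraction: from an independent set in `addK23 G v' t` that
dominates every `inl` vertex outside it and the whole block, we get an IDS-type bound. -/
lemma addK23_lower {A' : Set (V ⊕ (Fin 2 ⊕ Fin 3))}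
    (hind : ∀ u ∈ A', ∀ w ∈ A', ¬ (addK23 G v' t).Adj u w)
    (hdom : ∀ u : V, inl u ∉ A' → ∃ b ∈ A', (addK23 G v' t).Adj b (inl u))
    (hdomx : ∀ k : Fin 3, k ≠ t →
      (inr (inr k) ∈ A' ∨ ∃ b ∈ A', (addK23 G v' t).Adj b (inr (inr k))))
    (hdomp : ∀ i : Fin 2,
      (inr (inl i) ∈ A' ∨ ∃ b ∈ A', (addK23 G v' t).Adj b (inr (inl i)))) :
    iNum G + 2 ≤ A'.ncard := by
  classical
  set T : Set V := Sum.inl ⁻¹' A' with hT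
  have hdecomp : A'.ncard = T.ncard + (A' ∩ Set.range inr).ncard := sum_ncard_decomp A'
  have hindT : ∀ u ∈ T, ∀ w ∈ T, ¬ G.Adj u w := by
    intro u hu w hw hadj
    exact hind _ hu _ hw (by simpa using hadj)
  have hB2 : 2 ≤ (A' ∩ Set.range inr).ncard := block_two G v' t hind hdomx hdomp
  by_cases hTd : ∀ u, u ∉ T → ∃ b ∈ T, G.Adj b u
  · have := iNum_le (G := G) ⟨hindT, hTd⟩
    omega
  · push_neg at hTd
    obtain ⟨u, hu, hnb⟩ := hTd
    obtain ⟨b', hb', hadj⟩ := hdom u hu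
    have huv : u = v' ∧ inr (inr t) ∈ A' := by
      cases b' with
      | inl a =>
        exact absurd (by simpa using hadj) (hnb a hb')
      | inr w =>
        rw [addK23_adj_inr_inl] at hadj
        exact ⟨hadj.1, by rw [← hadj.2]; exact hb'⟩
    obtain ⟨hue, hc⟩ := huv
    rw [hue] at hu hnb
    -- part-2 vertices are not in A'
    have hp : ∀ i : Fin 2, inr (inl i) ∉ A' := by
      intro i hi
      exact hind _ hc _ hi (by simp)
    -- non-connector part-3 vertices are in A'
    have hx : ∀ k : Fin 3, k ≠ t → inr (inr k) ∈ A' := by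
      intro k hk
      rcases hdomx k hk with h | ⟨b, hb, hadj'⟩
      · exact h
      · obtain ⟨i, rfl⟩ := dominator_of_x G v' t hk hadj'
        exact absurd hb (hp i)
    obtain ⟨k₁, k₂, hk12, hk1t, hk2t⟩ : ∃ k₁ k₂ : Fin 3, k₁ ≠ k₂ ∧ k₁ ≠ t ∧ k₂ ≠ t := by
      have : ∀ t : Fin 3, ∃ k₁ k₂ : Fin 3, k₁ ≠ k₂ ∧ k₁ ≠ t ∧ k₂ ≠ t := by decide
      exact this t
    have hB3 : 3 ≤ (A' ∩ Set.range inr).ncard := by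
      have := (Set.two_lt_ncard (Set.toFinite (A' ∩ Set.range inr))).mpr
        ⟨inr (inr t), ⟨hc, by simp⟩, inr (inr k₁), ⟨hx k₁ hk1t, by simp⟩,
          inr (inr k₂), ⟨hx k₂ hk2t, by simp⟩,
          by simp [hk1t.symm], by simp [hk2t.symm], by simp [hk12]⟩
      omega
    have hS₂ : IsIDSet G (insert v' T) := by
      constructor
      · intro a ha b hb hadj'
        rcases ha with rfl | ha <;> rcases hb with rfl | hb
        · exact G.irrefl hadj'
        · exact hnb b hb hadj'.symm
        · exact hnb a ha hadj'
        · exact hindT a ha b hb hadj'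
      · intro w hw
        have hwT : w ∉ T := fun h => hw (Or.inr h)
        have hwv : w ≠ v' := fun h => hw (Or.inl h)
        obtain ⟨b, hb, hadj'⟩ := hdom w (hwT)
        cases b with
        | inl a => exact ⟨a, Or.inr hb, by simpa using hadj'⟩
        | inr z =>
          rw [addK23_adj_inr_inl] at hadj'
          exact absurd hadj'.1 hwv
    have hle := iNum_le hS₂
    have hins : (insert v' T).ncard = T.ncard + 1 :=
      Set.ncard_insert_of_notMem hu (Set.toFinite T)
    omega

lemma iNum_addK23 : iNum (addK23 G v' t) = iNum G + 2 := by
  apply le_antisymm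
  · obtain ⟨S, hS, hcard⟩ := exists_min G
    have := iNum_le (isIDSet_union_pair G v' t hS)
    rw [ncard_union_pair, hcard] at this
    exact this
  · refine le_iNum _ fun A' hA' => ?_
    refine addK23_lower G v' t hA'.1 (fun u hu => hA'.2 _ hu) ?_ ?_
    · intro k _
      by_cases h : inr (inr k) ∈ A'
      · exact Or.inl h
      · exact Or.inr (hA'.2 _ h)
    · intro i
      by_cases h : inr (inl i) ∈ A'
      · exact Or.inl h
      · exact Or.inr (hA'.2 _ h)

lemma indep_union_pair {A : Set V} (hind : ∀ u ∈ A, ∀ w ∈ A, ¬ G.Adj u w) :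
    ∀ x ∈ (inl '' A ∪ {inr (inl 0), inr (inl 1)} : Set (V ⊕ (Fin 2 ⊕ Fin 3))),
      ∀ y ∈ (inl '' A ∪ {inr (inl 0), inr (inl 1)} : Set (V ⊕ (Fin 2 ⊕ Fin 3))),
        ¬ (addK23 G v' t).Adj x y := by
  rintro x (⟨a, ha, rfl⟩ | hx) y (⟨b, hb, rfl⟩ | hy) hadj
  · exact hind a ha b hb (by simpa using hadj)
  · rcases hy with rfl | rfl <;> simp at hadj
  · rcases hx with rfl | rfl <;> simp at hadj
  · rcases hx with rfl | rfl <;> rcases hy with rfl | rfl <;> simp at hadj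

/-- Deleting `inl v'` (the attachment vertex) from `addK23 G v' t`. -/
lemma iNum_addK23_del_attach :
    iNum ((addK23 G v' t).induce ({inl v'}ᶜ : Set (V ⊕ (Fin 2 ⊕ Fin 3)))) =
      iNum (G.induce ({v'}ᶜ : Set V)) + 2 := by
  apply le_antisymm
  · obtain ⟨A, hA, hcard⟩ := exists_del_min G v'
    have hdel : DelIDS (addK23 G v' t) (inl v')
        (inl '' A ∪ {inr (inl 0), inr (inl 1)}) := by
      refine ⟨?_, indep_union_pair G v' t hA.2.1, ?_⟩
      · rintro (⟨a, ha, h⟩ | h)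
        · exact hA.1 (by rwa [Sum.inl_injective h] at ha)
        · rcases h with h | h <;> simp at h
      · intro w hw hwv
        cases w with
        | inl u =>
          have hu : u ∉ A := fun h => hw (Or.inl ⟨u, h, rfl⟩)
          obtain ⟨b, hb, hadj⟩ := hA.2.2 u hu (by simpa using hwv)
          exact ⟨inl b, Or.inl ⟨b, hb, rfl⟩, by simpa using hadj⟩
        | inr w =>
          cases w with
          | inl i =>
            exfalso; apply hw
            fin_cases i
            · exact Or.inr (Or.inl rfl)
            · exact Or.inr (Or.inr rfl)
          | inr k => exact ⟨inr (inl 0), Or.inr (Or.inl rfl), by simp⟩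
    have := iNum_del_le hdel
    rwa [ncard_union_pair, hcard] at this
  · refine le_iNum_del _ _ fun A' hA' => ?_
    set T : Set V := Sum.inl ⁻¹' A' with hT
    have hdecomp : A'.ncard = T.ncard + (A' ∩ Set.range inr).ncard := sum_ncard_decomp A'
    have hB2 : 2 ≤ (A' ∩ Set.range inr).ncard := by
      refine block_two G v' t hA'.2.1 ?_ ?_
      · intro k _
        by_cases h : inr (inr k) ∈ A'
        · exact Or.inl h
        · exact Or.inr (hA'.2.2 _ h (by simp))
      · intro i
        by_cases h : inr (inl i) ∈ A'
        · exact Or.inl h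
        · exact Or.inr (hA'.2.2 _ h (by simp))
    have hdel : DelIDS G v' T := by
      refine ⟨hA'.1, ?_, ?_⟩
      · intro u hu w hw hadj
        exact hA'.2.1 _ hu _ hw (by simpa using hadj)
      · intro u hu huv
        obtain ⟨b, hb, hadj⟩ := hA'.2.2 (inl u) hu (by simpa using huv)
        cases b with
        | inl a => exact ⟨a, hb, by simpa using hadj⟩
        | inr w =>
          rw [addK23_adj_inr_inl] at hadj
          exact absurd hadj.1 huv
    have := iNum_del_le hdel
    omega

/-- Deleting `inl a` for `a ≠ v'` from `addK23 G v' t`. -/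
lemma iNum_addK23_del_inl {a : V} (ha : a ≠ v') :
    iNum ((addK23 G v' t).induce ({inl a}ᶜ : Set (V ⊕ (Fin 2 ⊕ Fin 3)))) =
      iNum (G.induce ({a}ᶜ : Set V)) + 2 := by
  apply le_antisymm
  · obtain ⟨A, hA, hcard⟩ := exists_del_min G a
    have hdel : DelIDS (addK23 G v' t) (inl a)
        (inl '' A ∪ {inr (inl 0), inr (inl 1)}) := by
      refine ⟨?_, indep_union_pair G v' t hA.2.1, ?_⟩
      · rintro (⟨b, hb, h⟩ | h)
        · exact hA.1 (by rwa [Sum.inl_injective h] at hb)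
        · rcases h with h | h <;> simp at h
      · intro w hw hwv
        cases w with
        | inl u =>
          have hu : u ∉ A := fun h => hw (Or.inl ⟨u, h, rfl⟩)
          obtain ⟨b, hb, hadj⟩ := hA.2.2 u hu (by simpa using hwv)
          exact ⟨inl b, Or.inl ⟨b, hb, rfl⟩, by simpa using hadj⟩
        | inr w =>
          cases w with
          | inl i =>
            exfalso; apply hw
            fin_cases i
            · exact Or.inr (Or.inl rfl)
            · exact Or.inr (Or.inr rfl)
          | inr k => exact ⟨inr (inl 0), Or.inr (Or.inl rfl), by simp⟩
    have := iNum_del_le hdel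
    rwa [ncard_union_pair, hcard] at this
  · refine le_iNum_del _ _ fun A' hA' => ?_
    set T : Set V := Sum.inl ⁻¹' A' with hT
    have hdecomp : A'.ncard = T.ncard + (A' ∩ Set.range inr).ncard := sum_ncard_decomp A'
    have haT : a ∉ T := hA'.1
    have hindT : ∀ u ∈ T, ∀ w ∈ T, ¬ G.Adj u w := by
      intro u hu w hw hadj
      exact hA'.2.1 _ hu _ hw (by simpa using hadj)
    have hB2 : 2 ≤ (A' ∩ Set.range inr).ncard := by
      refine block_two G v' t hA'.2.1 ?_ ?_
      · intro k _
        by_cases h : inr (inr k) ∈ A'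
        · exact Or.inl h
        · exact Or.inr (hA'.2.2 _ h (by simp))
      · intro i
        by_cases h : inr (inl i) ∈ A'
        · exact Or.inl h
        · exact Or.inr (hA'.2.2 _ h (by simp))
    by_cases hTd : ∀ u, u ∉ T → u ≠ a → ∃ b ∈ T, G.Adj b u
    · have := iNum_del_le (⟨haT, hindT, hTd⟩ : DelIDS G a T)
      omega
    · push_neg at hTd
      obtain ⟨u, hu, hua, hnb⟩ := hTd
      obtain ⟨b', hb', hadj⟩ := hA'.2.2 (inl u) hu (by simpa using hua)
      have huv : u = v' ∧ inr (inr t) ∈ A' := by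
        cases b' with
        | inl x => exact absurd (by simpa using hadj) (hnb x hb')
        | inr w =>
          rw [addK23_adj_inr_inl] at hadj
          exact ⟨hadj.1, by rw [← hadj.2]; exact hb'⟩
      obtain ⟨hue, hc⟩ := huv
      rw [hue] at hu hnb hua
      have hp : ∀ i : Fin 2, inr (inl i) ∉ A' := by
        intro i hi
        exact hA'.2.1 _ hc _ hi (by simp)
      have hx : ∀ k : Fin 3, k ≠ t → inr (inr k) ∈ A' := by
        intro k hk
        by_cases h : inr (inr k) ∈ A'
        · exact h
        · obtain ⟨b, hb, hadj'⟩ := hA'.2.2 _ h (by simp)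
          obtain ⟨i, rfl⟩ := dominator_of_x G v' t hk hadj'
          exact absurd hb (hp i)
      obtain ⟨k₁, k₂, hk12, hk1t, hk2t⟩ : ∃ k₁ k₂ : Fin 3, k₁ ≠ k₂ ∧ k₁ ≠ t ∧ k₂ ≠ t := by
        have : ∀ t : Fin 3, ∃ k₁ k₂ : Fin 3, k₁ ≠ k₂ ∧ k₁ ≠ t ∧ k₂ ≠ t := by decide
        exact this t
      have hB3 : 3 ≤ (A' ∩ Set.range inr).ncard := by
        have := (Set.two_lt_ncard (Set.toFinite (A' ∩ Set.range inr))).mpr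
          ⟨inr (inr t), ⟨hc, by simp⟩, inr (inr k₁), ⟨hx k₁ hk1t, by simp⟩,
            inr (inr k₂), ⟨hx k₂ hk2t, by simp⟩,
            by simp [hk1t.symm], by simp [hk2t.symm], by simp [hk12]⟩
        omega
      have hdel : DelIDS G a (insert v' T) := by
        refine ⟨?_, ?_, ?_⟩
        · rintro (h | h)
          · exact ha h
          · exact haT h
        · intro x hxm y hym hadj'
          rcases hxm with rfl | hxm <;> rcases hym with rfl | hym
          · exact G.irrefl hadj'
          · exact hnb y hym hadj'.symm
          · exact hnb x hxm hadj'
          · exact hindT x hxm y hym hadj'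
        · intro w hw hwa
          have hwT : w ∉ T := fun h => hw (Or.inr h)
          have hwv : w ≠ v' := fun h => hw (Or.inl h)
          obtain ⟨b, hb, hadj'⟩ := hA'.2.2 (inl w) hwT (by simpa using hwa)
          cases b with
          | inl x => exact ⟨x, Or.inr hb, by simpa using hadj'⟩
          | inr z =>
            rw [addK23_adj_inr_inl] at hadj'
            exact absurd hadj'.1 hwv
      have hle := iNum_del_le hdel
      have hins : (insert v' T).ncard = T.ncard + 1 :=
        Set.ncard_insert_of_notMem hu (Set.toFinite T)
      omega

/-- Deleting a non-attachment degree-2 vertex of the added `K_{2,3}`. -/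
lemma iNum_addK23_del_inr {j : Fin 3} (hj : j ≠ t)
    (hvdel : iNum (G.induce ({v'}ᶜ : Set V)) + 1 = iNum G) :
    iNum ((addK23 G v' t).induce ({inr (inr j)}ᶜ : Set (V ⊕ (Fin 2 ⊕ Fin 3)))) =
      iNum G + 1 := by
  obtain ⟨k, hkt, hkj⟩ : ∃ k : Fin 3, k ≠ t ∧ k ≠ j := by
    have : ∀ j t : Fin 3, j ≠ t → ∃ k : Fin 3, k ≠ t ∧ k ≠ j := by decide
    exact this j t hj
  apply le_antisymm
  · obtain ⟨A, hA, hcard⟩ := exists_del_min G v'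
    have hdel : DelIDS (addK23 G v' t) (inr (inr j))
        (inl '' A ∪ {inr (inr t), inr (inr k)}) := by
      refine ⟨?_, ?_, ?_⟩
      · rintro (⟨b, hb, h⟩ | h)
        · simp at h
        · rcases h with h | h
          · exact hj (by simpa using h)
          · exact hkj (Eq.symm (by simpa using h))
      · rintro x (⟨a, haA, rfl⟩ | hx) y (⟨b, hb, rfl⟩ | hy) hadj
        · exact hA.2.1 a haA b hb (by simpa using hadj)
        · rcases hy with rfl | rfl <;>
            · rw [addK23_adj_inl_inr] at hadj
              rcases hadj with ⟨h1, -⟩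
              exact hA.1 (h1 ▸ haA)
        · rcases hx with rfl | rfl <;>
            · rw [addK23_adj_inr_inl] at hadj
              rcases hadj with ⟨h1, -⟩
              exact hA.1 (h1 ▸ hb)
        · rcases hx with rfl | rfl <;> rcases hy with rfl | rfl <;> simp at hadj
      · intro w hw hwdel
        cases w with
        | inl u =>
          by_cases huv : u = v'
          · exact ⟨inr (inr t), Or.inr (Or.inl rfl), by simp [huv]⟩
          · have hu : u ∉ A := fun h => hw (Or.inl ⟨u, h, rfl⟩)
            obtain ⟨b, hb, hadj⟩ := hA.2.2 u hu huv
            exact ⟨inl b, Or.inl ⟨b, hb, rfl⟩, by simpa using hadj⟩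
        | inr w =>
          cases w with
          | inl i => exact ⟨inr (inr t), Or.inr (Or.inl rfl), by simp⟩
          | inr k' =>
            exfalso
            have hk't : k' ≠ t := fun h => hw (Or.inr (Or.inl (by simp [h])))
            have hk'k : k' ≠ k := fun h => hw (Or.inr (Or.inr (by simp [h])))
            have hk'j : k' ≠ j := fun h => hwdel (by rw [h])
            have : ∀ j t k k' : Fin 3, j ≠ t → k ≠ t → k ≠ j →
                k' ≠ t → k' ≠ k → k' = j := by decide
            exact hk'j (this j t k k' hj hkt hkj hk't hk'k)
    have hle := iNum_del_le hdel
    have hcard2 : (inl '' A ∪ {inr (inr t), inr (inr k)} :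
        Set (V ⊕ (Fin 2 ⊕ Fin 3))).ncard = A.ncard + 2 := by
      rw [Set.ncard_union_eq ?_ (Set.toFinite _) (Set.toFinite _),
        Set.ncard_image_of_injective _ Sum.inl_injective,
        Set.ncard_pair (by simp [hkt.symm])]
      rw [Set.disjoint_left]
      rintro x ⟨b, -, rfl⟩ (h | h) <;> simp at h
    rw [hcard2, hcard] at hle
    omega
  · refine le_iNum_del _ _ fun A' hA' => ?_
    set T : Set V := Sum.inl ⁻¹' A' with hT
    have hdecomp : A'.ncard = T.ncard + (A' ∩ Set.range inr).ncard := sum_ncard_decomp A'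
    have hindT : ∀ u ∈ T, ∀ w ∈ T, ¬ G.Adj u w := by
      intro u hu w hw hadj
      exact hA'.2.1 _ hu _ hw (by simpa using hadj)
    by_cases hTd : ∀ u, u ∉ T → ∃ b ∈ T, G.Adj b u
    · have hle := iNum_le (G := G) ⟨hindT, hTd⟩
      have hB1 : 1 ≤ (A' ∩ Set.range inr).ncard := by
        have hne : (A' ∩ Set.range inr).Nonempty := by
          by_cases h : inr (inl 0) ∈ A'
          · exact ⟨inr (inl 0), h, by simp⟩
          · obtain ⟨b, hb, hadj⟩ := hA'.2.2 (inr (inl 0)) h (by simp)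
            obtain ⟨k', rfl⟩ := dominator_of_p G v' t hadj
            exact ⟨inr (inr k'), hb, by simp⟩
        exact (Set.ncard_pos (Set.toFinite _)).mpr hne
      omega
    · push_neg at hTd
      obtain ⟨u, hu, hnb⟩ := hTd
      obtain ⟨b', hb', hadj⟩ := hA'.2.2 (inl u) hu (by simp)
      have huv : u = v' ∧ inr (inr t) ∈ A' := by
        cases b' with
        | inl x => exact absurd (by simpa using hadj) (hnb x hb')
        | inr w =>
          rw [addK23_adj_inr_inl] at hadj
          exact ⟨hadj.1, by rw [← hadj.2]; exact hb'⟩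
      obtain ⟨hue, hc⟩ := huv
      rw [hue] at hu hnb
      have hp : ∀ i : Fin 2, inr (inl i) ∉ A' := by
        intro i hi
        exact hA'.2.1 _ hc _ hi (by simp)
      have hxk : inr (inr k) ∈ A' := by
        by_cases h : inr (inr k) ∈ A'
        · exact h
        · obtain ⟨b, hb, hadj'⟩ := hA'.2.2 _ h (by simp [hkj])
          obtain ⟨i, rfl⟩ := dominator_of_x G v' t hkt hadj'
          exact absurd hb (hp i)
      have hB2 : 2 ≤ (A' ∩ Set.range inr).ncard := by
        have := (Set.one_lt_ncard (Set.toFinite (A' ∩ Set.range inr))).mpr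
          ⟨inr (inr t), ⟨hc, by simp⟩, inr (inr k), ⟨hxk, by simp⟩, by simp [hkt.symm]⟩
        omega
      have hS₂ : IsIDSet G (insert v' T) := by
        constructor
        · intro x hxm y hym hadj'
          rcases hxm with rfl | hxm <;> rcases hym with rfl | hym
          · exact G.irrefl hadj'
          · exact hnb y hym hadj'.symm
          · exact hnb x hxm hadj'
          · exact hindT x hxm y hym hadj'
        · intro w hw
          have hwT : w ∉ T := fun h => hw (Or.inr h)
          have hwv : w ≠ v' := fun h => hw (Or.inl h)
          obtain ⟨b, hb, hadj'⟩ := hA'.2.2 (inl w) hwT (by simp)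
          cases b with
          | inl x => exact ⟨x, Or.inr hb, by simpa using hadj'⟩
          | inr z =>
            rw [addK23_adj_inr_inl] at hadj'
            exact absurd hadj'.1 hwv
      have hle := iNum_le hS₂
      have hins : (insert v' T).ncard = T.ncard + 1 :=
        Set.ncard_insert_of_notMem hu (Set.toFinite T)
      omega

end AddK23

section FinsetBridge

variable {V : Type*} [Fintype V] [DecidableEq V] {G : SimpleGraph V}

lemma isIDSet_coe_finset {F : Finset V}
    (h1 : ∀ u ∈ F, ∀ w ∈ F, ¬ G.Adj u w)
    (h2 : ∀ v, v ∉ F → ∃ u ∈ F, G.Adj u v) : IsIDSet G (↑F : Set V) := by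
  refine ⟨?_, ?_⟩
  · intro u hu w hw
    exact h1 u (by simpa using hu) w (by simpa using hw)
  · intro v hv
    obtain ⟨u, hu, hadj⟩ := h2 v (by simpa using hv)
    exact ⟨u, by simpa using hu, hadj⟩

lemma iNum_le_finset {F : Finset V}
    (h1 : ∀ u ∈ F, ∀ w ∈ F, ¬ G.Adj u w)
    (h2 : ∀ v, v ∉ F → ∃ u ∈ F, G.Adj u v) : iNum G ≤ F.card := by
  have := iNum_le (isIDSet_coe_finset h1 h2)
  rwa [Set.ncard_coe_finset] at this

lemma le_iNum_finset {m : ℕ}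
    (h : ∀ F : Finset V, (∀ u ∈ F, ∀ w ∈ F, ¬ G.Adj u w) →
      (∀ v, v ∉ F → ∃ u ∈ F, G.Adj u v) → m ≤ F.card) : m ≤ iNum G := by
  refine le_iNum G fun S hS => ?_
  rw [Set.ncard_eq_toFinset_card S (Set.toFinite S)]
  refine h _ ?_ ?_
  · intro u hu w hw
    exact hS.1 u (by simpa using hu) w (by simpa using hw)
  · intro v hv
    obtain ⟨u, hu, hadj⟩ := hS.2 v (by simpa using hv)
    exact ⟨u, by simpa using hu, hadj⟩

lemma iNum_del_le_finset {v : V} {F : Finset V} (h0 : v ∉ F)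
    (h1 : ∀ u ∈ F, ∀ w ∈ F, ¬ G.Adj u w)
    (h2 : ∀ u, u ∉ F → u ≠ v → ∃ b ∈ F, G.Adj b u) :
    iNum (G.induce ({v}ᶜ : Set V)) ≤ F.card := by
  have : DelIDS G v (↑F : Set V) := by
    refine ⟨by simpa using h0, ?_, ?_⟩
    · intro u hu w hw
      exact h1 u (by simpa using hu) w (by simpa using hw)
    · intro u hu hne
      obtain ⟨b, hb, hadj⟩ := h2 u (by simpa using hu) hne
      exact ⟨b, by simpa using hb, hadj⟩
  have := iNum_del_le this
  rwa [Set.ncard_coe_finset] at this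

lemma le_iNum_del_finset {v : V} {m : ℕ}
    (h : ∀ F : Finset V, v ∉ F → (∀ u ∈ F, ∀ w ∈ F, ¬ G.Adj u w) →
      (∀ u, u ∉ F → u ≠ v → ∃ b ∈ F, G.Adj b u) → m ≤ F.card) :
    m ≤ iNum (G.induce ({v}ᶜ : Set V)) := by
  refine le_iNum_del G v fun A hA => ?_
  rw [Set.ncard_eq_toFinset_card A (Set.toFinite A)]
  refine h _ (by simpa using hA.1) ?_ ?_
  · intro u hu w hw
    exact hA.2.1 u (by simpa using hu) w (by simpa using hw)
  · intro u hu hne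
    obtain ⟨b, hb, hadj⟩ := hA.2.2 u (by simpa using hu) hne
    exact ⟨b, by simpa using hb, hadj⟩

lemma deg_eq_filter [DecidableRel G.Adj] (v : V) :
    deg G v = (Finset.univ.filter (G.Adj v)).card := by
  rw [deg, Set.ncard_eq_toFinset_card']
  congr 1
  ext w
  simp [SimpleGraph.mem_neighborSet]

end FinsetBridge

section BaseCase

instance : DecidableRel baseGraph.Adj := fun a b =>
  decidable_of_iff _ (SimpleGraph.fromRel_adj _ a b).symm

lemma base_deg_two : ∀ v : Fin 6, deg baseGraph v = 2 → v = 3 ∨ v = 4 := by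
  intro v hv
  rw [deg_eq_filter] at hv
  revert hv
  revert v
  decide

lemma base_nonroot_deg : ∀ w : Fin 6, w ≠ 5 → 2 ≤ deg baseGraph w := by
  intro w hw
  rw [deg_eq_filter]
  revert hw
  revert w
  decide

lemma iNum_base : iNum baseGraph = 3 := by
  apply le_antisymm
  · have := iNum_le_finset (G := baseGraph) (F := {0, 1, 5}) (by decide) (by decide)
    simpa using this
  · exact le_iNum_finset (by decide)

lemma iNum_base_del :
    ∀ v : Fin 6, v = 3 ∨ v = 4 ∨ v = 5 →
      iNum (baseGraph.induce ({v}ᶜ : Set (Fin 6))) = 2 := by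
  have h3 : iNum (baseGraph.induce ({(3 : Fin 6)}ᶜ : Set (Fin 6))) = 2 := by
    apply le_antisymm
    · have := iNum_del_le_finset (G := baseGraph) (v := 3) (F := {2, 4})
        (by decide) (by decide) (by decide)
      simpa using this
    · exact le_iNum_del_finset (by decide)
  have h4 : iNum (baseGraph.induce ({(4 : Fin 6)}ᶜ : Set (Fin 6))) = 2 := by
    apply le_antisymm
    · have := iNum_del_le_finset (G := baseGraph) (v := 4) (F := {2, 3})
        (by decide) (by decide) (by decide)
      simpa using this
    · exact le_iNum_del_finset (by decide)
  have h5 : iNum (baseGraph.induce ({(5 : Fin 6)}ᶜ : Set (Fin 6))) = 2 := by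
    apply le_antisymm
    · have := iNum_del_le_finset (G := baseGraph) (v := 5) (F := {0, 1})
        (by decide) (by decide) (by decide)
      simpa using this
    · exact le_iNum_del_finset (by decide)
  rintro v (rfl | rfl | rfl) <;> assumption

end BaseCase

section Family

open Sum

lemma famB_finite {V : Type} {G : SimpleGraph V} {r : V} (hG : FamilyBRoot G r) :
    Finite V := by
  induction hG with
  | base => infer_instance
  | extend hG v' hv' t ih => haveI := ih; exact inferInstance
  | iso e hG ih => exact Finite.of_equiv _ e.toEquiv

lemma famB_nonroot_deg {V : Type} {G : SimpleGraph V} {r : V} (hG : FamilyBRoot G r) :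
    ∀ w, w ≠ r → 2 ≤ deg G w := by
  induction hG with
  | base => exact base_nonroot_deg
  | @extend V G r hG v' hv' t ih =>
    haveI : Finite V := famB_finite hG
    rintro (a | w) hw
    · have ha : a ≠ r := fun h => hw (by rw [h])
      by_cases hav : a = v'
      · subst hav
        rw [addK23_deg_inl_eq]
        have := ih a ha
        omega
      · rw [addK23_deg_inl_ne _ _ _ _ hav]
        exact ih a ha
    · cases w with
      | inl i => rw [addK23_deg_inr_inl]; omega
      | inr j =>
        by_cases hjt : j = t
        · subst hjt; rw [addK23_deg_inr_inr_t]; omega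
        · rw [addK23_deg_inr_inr _ _ _ hjt]
  | @iso V W G H r e hG ih =>
    intro w hw
    have h1 : deg H w = deg G (e.symm w) := by
      have := deg_congr e (e.symm w)
      simpa using this
    rw [h1]
    refine ih _ fun h => hw ?_
    rw [← h]
    simp

end Family

/-- If `G ∈ 𝓑` has root `r` and `v` is either the root of `G` or a
vertex of degree 2 in `G`, then `i(G − v) = i(G) − 1`, where `G − v` is the graph
obtained from `G` by deleting the vertex `v`. -/
theorem statement11 {V : Type} (G : SimpleGraph V) (r : V) (hG : FamilyBRoot G r)
    (v : V) (hv : v = r ∨ deg G v = 2) :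
    iNum (G.induce ({v}ᶜ : Set V)) = iNum G - 1 := by
  revert v
  induction hG with
  | base =>
    intro v hv
    have hv' : v = 3 ∨ v = 4 ∨ v = 5 := by
      rcases hv with rfl | h
      · right; right; rfl
      · rcases base_deg_two v h with h | h
        · left; exact h
        · right; left; exact h
    rw [iNum_base, iNum_base_del v hv']
  | @extend V G r hG v' hvdeg t ih =>
    intro v hv
    haveI hfin : Finite V := famB_finite hG
    have hroot : 1 ≤ iNum G := one_le_iNum G r
    have hIH : ∀ u : V, u = r ∨ deg G u = 2 →
        iNum (G.induce ({u}ᶜ : Set V)) + 1 = iNum G := by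
      intro u hu
      have h1 := ih u hu
      omega
    have hK : iNum (addK23 G v' t) = iNum G + 2 := iNum_addK23 G v' t
    rw [hK]
    cases v with
    | inl a =>
      by_cases hav : a = v'
      · subst hav
        have hvr : a = r := by
          rcases hv with h | h
          · exact Sum.inl_injective h
          · rw [addK23_deg_inl_eq] at h
            have h1 : deg G a = 1 := by omega
            by_contra hne
            have := famB_nonroot_deg hG a hne
            omega
        rw [iNum_addK23_del_attach]
        have := hIH a (Or.inl hvr)
        omega
      · have har : a = r ∨ deg G a = 2 := by
          rcases hv with h | h
          · exact Or.inl (Sum.inl_injective h)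
          · rw [addK23_deg_inl_ne _ _ _ _ hav] at h
            exact Or.inr h
        rw [iNum_addK23_del_inl _ _ _ hav]
        have := hIH a har
        omega
    | inr w =>
      cases w with
      | inl i =>
        exfalso
        rcases hv with h | h
        · simp at h
        · rw [addK23_deg_inr_inl] at h
          omega
      | inr j =>
        have hjt : j ≠ t := by
          rintro rfl
          rcases hv with h | h
          · simp at h
          · rw [addK23_deg_inr_inr_t] at h
            omega
        have hvIH : iNum (G.induce ({v'}ᶜ : Set V)) + 1 = iNum G := by
          apply hIH v'
          rcases Nat.lt_or_ge (deg G v') 2 with h | h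
          · left
            by_contra hne
            have := famB_nonroot_deg hG v' hne
            omega
          · right
            omega
        rw [iNum_addK23_del_inr G v' t hjt hvIH]
        omega
  | @iso V W G H r e hG ih =>
    intro v hv
    haveI hfinV : Finite V := famB_finite hG
    haveI hfinW : Finite W := Finite.of_equiv _ e.toEquiv
    set u := e.symm v with hu
    have hveu : v = e u := by simp [hu]
    have hu' : u = r ∨ deg G u = 2 := by
      rcases hv with h | h
      · left; rw [hu, h]; simp
      · right
        rw [← deg_congr e u, ← hveu]
        exact h
    have h1 : iNum (H.induce ({v}ᶜ : Set W)) = iNum (G.induce ({u}ᶜ : Set V)) := by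
      rw [hveu]
      exact (iNum_congr (isoInduceCompl e u)).symm
    rw [h1, ih u hu', iNum_congr e]

end PaperIndepDom
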